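/- If G is a strongly 2-monophonic graph and x,y are vertices with N[y] ⊆ N[x], then x is a universal vertex of G (adjacent to all other vertices). -/

import Mathlib

open SimpleGraph

variable {V : Type*}

/-- A walk is an induced path if it is a path and every edge of the graph between
vertices of the walk is an edge of the walk. -/
def IsInducedPath (G : SimpleGraph V) {u v : V} (p : G.Walk u v) : Prop :=
  p.IsPath ∧ ∀ a b : V, a ∈ p.support → b ∈ p.support → G.Adj a b → p.toSubgraph.Adj a b

/-- The monophonic interval: all vertices lying on some induced `u,v`-path. -/
def monoInterval (G : SimpleGraph V) (u v : V) : Set V :=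
  {w | ∃ p : G.Walk u v, IsInducedPath G p ∧ w ∈ p.support}

/-- A set `S` is monophonic if every vertex lies in the monophonic interval
of some pair of vertices of `S`. -/
def IsMonophonicSet (G : SimpleGraph V) (S : Set V) : Prop :=
  ∀ w : V, ∃ x ∈ S, ∃ y ∈ S, w ∈ monoInterval G x y

/-- The monophonic number: least cardinality of a monophonic set. -/
noncomputable def monophonicNumber (G : SimpleGraph V) : ℕ :=
  sInf {n : ℕ | ∃ S : Finset V, S.card = n ∧ IsMonophonicSet G (S : Set V)}

/-- A graph is strongly 2-monophonic if every pair of non-adjacent vertices is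
a monophonic set. -/
def Strongly2Monophonic (G : SimpleGraph V) : Prop :=
  ∀ x y : V, x ≠ y → ¬ G.Adj x y → IsMonophonicSet G {x, y}

/-- A closed walk is an induced cycle if it is a cycle and every edge of the graph
between vertices of the walk is an edge of the walk. -/
def IsInducedCycle (G : SimpleGraph V) {a : V} (w : G.Walk a a) : Prop :=
  w.IsCycle ∧ ∀ u v : V, u ∈ w.support → v ∈ w.support → G.Adj u v → w.toSubgraph.Adj u v

/-- The Kneser graph `K(n,r)`: vertices are `r`-subsets of `[n]`, adjacent iff disjoint. -/
def kneser (n r : ℕ) : SimpleGraph {s : Finset (Fin n) // s.card = r} where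
  Adj a b := a ≠ b ∧ Disjoint a.1 b.1
  symm := ⟨fun _ _ h => ⟨h.1.symm, h.2.symm⟩⟩
  loopless := ⟨fun _ h => h.1 rfl⟩

/-- The Johnson graph `J(n,r)`: vertices are `r`-subsets of `[n]`, adjacent iff the
intersection has `r-1` elements. -/
def johnson (n r : ℕ) : SimpleGraph {s : Finset (Fin n) // s.card = r} where
  Adj a b := a ≠ b ∧ (a.1 ∩ b.1).card = r - 1
  symm := ⟨fun _ _ h => ⟨h.1.symm, by rw [Finset.inter_comm]; exact h.2⟩⟩
  loopless := ⟨fun _ h => h.1 rfl⟩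

/-
If `N[y] ⊆ N[x]` with `y ≠ x`, then `y` lies on no induced path from `x` to a vertex other
than `y`: on such a path the only neighbour of `x` is the second vertex, so that vertex is `y`, and
the third vertex is a neighbour of `y`, hence of `x`, hence again the second vertex. So if `x` had
a non-neighbour `z`, the pair `{x, z}` could not be monophonic, since `y` lies on no induced path
between `x` and `z`.
-/

namespace IsInducedPath

variable {V : Type*} {G : SimpleGraph V} {u v w : V}

theorem reverse {p : G.Walk u v} (hp : IsInducedPath G p) : IsInducedPath G p.reverse := by
  refine ⟨hp.1.reverse, fun a b ha hb hab => ?_⟩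
  rw [Walk.toSubgraph_reverse]
  exact hp.2 a b (by simpa using ha) (by simpa using hb) hab

theorem eq_snd_of_adj {p : G.Walk u v} (hp : IsInducedPath G p) (hnil : ¬p.Nil)
    (hw : w ∈ p.support) (huw : G.Adj u w) : w = p.snd := by
  have hsub : w ∈ p.toSubgraph.neighborSet u := hp.2 u w p.start_mem_support hw huw
  rwa [hp.1.neighborSet_toSubgraph_startpoint hnil] at hsub

theorem notMem_support_of_closedNbhd_subset {y : V} {p : G.Walk u v}
    (hp : IsInducedPath G p) (huy : u ≠ y) (hvy : v ≠ y)
    (hN : G.neighborSet y ∪ {y} ⊆ G.neighborSet u ∪ {u}) : y ∉ p.support := by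
  intro hy
  cases p with
  | nil => exact huy (Walk.mem_support_nil_iff.mp hy).symm
  | cons hua q =>
    have hadj : G.Adj u y := (hN (Or.inr rfl)).resolve_right huy.symm
    obtain rfl : y = _ := hp.eq_snd_of_adj Walk.not_nil_cons hy hadj
    cases q with
    | nil => exact hvy rfl
    | cons hyb r =>
      rename_i b
      rcases hN (Or.inl hyb) with hub | rfl
      · exact hyb.ne (hp.eq_snd_of_adj Walk.not_nil_cons (by simp) hub).symm
      · exact ((Walk.cons_isPath_iff hua _).mp hp.1).2 (by simp)

end IsInducedPath

section MonoInterval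

variable {V : Type*} {G : SimpleGraph V} {u v y : V}

theorem monoInterval_comm (G : SimpleGraph V) (u v : V) :
    monoInterval G u v = monoInterval G v u := by
  suffices ∀ u v, monoInterval G u v ⊆ monoInterval G v u from (this u v).antisymm (this v u)
  rintro u v w ⟨p, hp, hw⟩
  exact ⟨p.reverse, hp.reverse, by simpa using hw⟩

theorem eq_of_mem_monoInterval_self (hy : y ∈ monoInterval G u u) : y = u := by
  obtain ⟨p, hp, hy⟩ := hy
  rw [Walk.nil_iff_support_eq.mp (Walk.isPath_iff_nil.mp hp.1)] at hy
  exact List.mem_singleton.mp hy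

theorem notMem_monoInterval_of_closedNbhd_subset (huy : u ≠ y) (hvy : v ≠ y)
    (hN : G.neighborSet y ∪ {y} ⊆ G.neighborSet u ∪ {u}) : y ∉ monoInterval G u v :=
  fun ⟨_, hp, hy⟩ => hp.notMem_support_of_closedNbhd_subset huy hvy hN hy

end MonoInterval

theorem stmt11 {V : Type*} (G : SimpleGraph V) (h : Strongly2Monophonic G)
    (x y : V) (hxy : x ≠ y)
    (hN : G.neighborSet y ∪ {y} ⊆ G.neighborSet x ∪ {x}) :
    ∀ z : V, z ≠ x → G.Adj x z := by
  intro z hzx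
  by_contra hxz
  have hzy : z ≠ y := by
    rintro rfl
    exact hxz ((hN (Or.inr rfl)).resolve_right hxy.symm)
  obtain ⟨a, ha, b, hb, hy⟩ := h x z hzx.symm hxz y
  have hby : b ≠ y := by rcases hb with rfl | rfl <;> assumption
  rcases ha with rfl | rfl
  · exact notMem_monoInterval_of_closedNbhd_subset hxy hby hN hy
  · rcases hb with rfl | rfl
    · rw [monoInterval_comm] at hy
      exact notMem_monoInterval_of_closedNbhd_subset hxy hzy hN hy
    · exact hzy (eq_of_mem_monoInterval_self hy).symm
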